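/- arXiv:1902.05293 — 2 statements merged into one kernel-verified Lean document; each statement's English description precedes it below -/
import Mathlib

section
/- Let E: (0,∞) → [0,∞) be a nondecreasing differentiable function, and suppose there exist constants n ≥ 2 (an integer), C > 0, α > 0 such that (2-2n)·E(R) + R·E'(R) ≥ -C·R^{-α/2} for all large R. If E(R) → L as R → ∞ with L > 0 finite, then ∫_{R₀}^∞ E'(R) dR = ∞ for some R₀, a contradiction; hence L = 0, i.e., E ≡ 0. -/
open MeasureTheory

noncomputable section

/-- `ℂⁿ` with its standard (flat Kähler) Euclidean structure. -/
abbrev Cn (n : ℕ) := EuclideanSpace ℂ (Fin n)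

instance (n : ℕ) : MeasurableSpace (Cn n) := borel _
instance (n : ℕ) : BorelSpace (Cn n) := ⟨rfl⟩

/-- The `i`-th vector of the standard Hermitian frame `{eᵢ, Jeᵢ}` of `ℂⁿ`
(the other half of the frame is `Complex.I • sframe i`). -/
def sframe {n : ℕ} (i : Fin n) : Cn n := EuclideanSpace.single i 1

/-- A Riemannian manifold `N`, presented in a global chart: a vector space `F`
together with a smooth, symmetric, positive definite metric `g` and its
Levi-Civita Christoffel symbols `Γ` (characterized by the Koszul formula). -/
structure RiemannianStructure (F : Type*) [NormedAddCommGroup F] [NormedSpace ℝ F] where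
  g : F → F →L[ℝ] F →L[ℝ] ℝ
  Γ : F → F →L[ℝ] F →L[ℝ] F
  g_symm : ∀ p u v, g p u v = g p v u
  g_posdef : ∀ p u, u ≠ 0 → 0 < g p u u
  g_smooth : ContDiff ℝ (⊤ : ℕ∞) g
  Γ_symm : ∀ p u v, Γ p u v = Γ p v u
  koszul : ∀ p u v w, 2 * g p (Γ p u v) w =
    fderiv ℝ g p u v w + fderiv ℝ g p v u w - fderiv ℝ g p w u v

/-- A Kähler manifold `N`, presented in a global chart: a Riemannian structure
together with a smooth orthogonal almost complex structure `J` which is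
parallel with respect to the Levi-Civita connection. -/
structure KahlerStructure (F : Type*) [NormedAddCommGroup F] [NormedSpace ℝ F]
    extends RiemannianStructure F where
  J : F → F →L[ℝ] F
  J_smooth : ContDiff ℝ (⊤ : ℕ∞) J
  J_sq : ∀ p v, J p (J p v) = -v
  J_isom : ∀ p u v, g p (J p u) (J p v) = g p u v
  J_parallel : ∀ p u v, fderiv ℝ J p u v + Γ p u (J p v) = J p (Γ p u v)

variable {n : ℕ} {F : Type*} [NormedAddCommGroup F] [NormedSpace ℝ F]

/-- The energy density `e(f) = (1/2) Σᵢ (|f_* eᵢ|² + |f_* Jeᵢ|²)` of a map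
`f : ℂⁿ → N`, the norms being taken in the metric `g` of `N`. -/
def energyDensity (g : F → F →L[ℝ] F →L[ℝ] ℝ) (f : Cn n → F) (x : Cn n) : ℝ :=
  (1/2) * ∑ i : Fin n,
    (g (f x) (fderiv ℝ f x (sframe i)) (fderiv ℝ f x (sframe i)) +
     g (f x) (fderiv ℝ f x (Complex.I • sframe i)) (fderiv ℝ f x (Complex.I • sframe i)))

/-- `∂̄f = f_*J - J'f_*`, evaluated at the point `x` on the vector `v`. -/
def dbar (K : KahlerStructure F) (f : Cn n → F) (x v : Cn n) : F :=
  fderiv ℝ f x (Complex.I • v) - K.J (f x) (fderiv ℝ f x v)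

/-- `∂f = f_*J + J'f_*`, evaluated at the point `x` on the vector `v`. -/
def dplus (K : KahlerStructure F) (f : Cn n → F) (x v : Cn n) : F :=
  fderiv ℝ f x (Complex.I • v) + K.J (f x) (fderiv ℝ f x v)

/-- The `∂̄`-energy density `e''(f) = |∂̄f|² = (1/4)|f_*J - J'f_*|²
 (= (1/4) Σᵢ (|f_*eᵢ|² + |f_*Jeᵢ|² - 2⟨J'f_*eᵢ, f_*Jeᵢ⟩) = (1/2)(e(f) - ⟨f*ω^N, ω⟩)). -/
def dbarDensity (K : KahlerStructure F) (f : Cn n → F) (x : Cn n) : ℝ :=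
  (1/4) * ∑ i : Fin n, K.g (f x) (dbar K f x (sframe i)) (dbar K f x (sframe i))

/-- The `∂`-energy density `e'(f) = |∂f|² = (1/4)|f_*J + J'f_*|²`. -/
def dplusDensity (K : KahlerStructure F) (f : Cn n → F) (x : Cn n) : ℝ :=
  (1/4) * ∑ i : Fin n, K.g (f x) (dplus K f x (sframe i)) (dplus K f x (sframe i))

/-- The pairing `⟨f*ω^N, ω⟩ = Σᵢ ω^N(f_*eᵢ, f_*Jeᵢ)` of the pulled-back Kähler
form with the Kähler form of `ℂⁿ`, where `ω^N(u,v) = ⟨J'u, v⟩`. -/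
def kahlerPairing (K : KahlerStructure F) (f : Cn n → F) (x : Cn n) : ℝ :=
  ∑ i : Fin n,
    K.g (f x) (K.J (f x) (fderiv ℝ f x (sframe i))) (fderiv ℝ f x (Complex.I • sframe i))

/-- The tension field `τ(f) = trace ∇df` of `f : ℂⁿ → N` in the chart of `N`:
`τ(f) = Σᵢ (D²f(eᵢ,eᵢ) + Γ(df eᵢ, df eᵢ) + D²f(Jeᵢ,Jeᵢ) + Γ(df Jeᵢ, df Jeᵢ))`. -/
def tension (Γ : F → F →L[ℝ] F →L[ℝ] F) (f : Cn n → F) (x : Cn n) : F :=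
  ∑ i : Fin n,
    (fderiv ℝ (fderiv ℝ f) x (sframe i) (sframe i)
      + Γ (f x) (fderiv ℝ f x (sframe i)) (fderiv ℝ f x (sframe i))
      + fderiv ℝ (fderiv ℝ f) x (Complex.I • sframe i) (Complex.I • sframe i)
      + Γ (f x) (fderiv ℝ f x (Complex.I • sframe i)) (fderiv ℝ f x (Complex.I • sframe i)))

/-- `f : ℂⁿ → N` is harmonic iff its tension field vanishes. -/
def IsHarmonic (Γ : F → F →L[ℝ] F →L[ℝ] F) (f : Cn n → F) : Prop :=
  ∀ x, tension Γ f x = 0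

/-- `f` is holomorphic: `f_*J = J'f_*`. -/
def IsHolomorphic (K : KahlerStructure F) (f : Cn n → F) : Prop :=
  ∀ x v, fderiv ℝ f x (Complex.I • v) = K.J (f x) (fderiv ℝ f x v)

/-- `f` is conjugate (anti-) holomorphic: `f_*J = -J'f_*`. -/
def IsAntiHolomorphic (K : KahlerStructure F) (f : Cn n → F) : Prop :=
  ∀ x v, fderiv ℝ f x (Complex.I • v) = -K.J (f x) (fderiv ℝ f x v)

/-- a nonnegative, nondecreasing, differentiable `E` on `(0,∞)` satisfying
`(2-2n)E(R) + R E'(R) ≥ -C R^{-α/2}` for large `R` (with `n ≥ 2`) and converging at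
infinity must converge to `0`, and hence vanish identically. -/
theorem vanishing_of_differential_inequality (E : ℝ → ℝ) (n : ℕ) (hn : 2 ≤ n)
    (C α L : ℝ) (hC : 0 < C) (hα : 0 < α)
    (hnonneg : ∀ R > (0 : ℝ), 0 ≤ E R)
    (hmono : MonotoneOn E (Set.Ioi (0 : ℝ)))
    (hdiff : ∀ R > (0 : ℝ), DifferentiableAt ℝ E R)
    (hineq : ∃ R₁ > (0 : ℝ), ∀ R ≥ R₁,
      ((2 : ℝ) - 2 * (n : ℝ)) * E R + R * deriv E R ≥ -C * R ^ (-(α / 2)))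
    (hlim : Filter.Tendsto E Filter.atTop (nhds L)) :
    L = 0 ∧ ∀ R > (0 : ℝ), E R = 0 := by
  obtain ⟨R₁, hR₁pos, hineq⟩ := hineq
  -- E R ≤ L for all R > 0
  have hEle : ∀ R > (0 : ℝ), E R ≤ L := by
    intro R hR
    refine ge_of_tendsto hlim ?_
    filter_upwards [Filter.eventually_ge_atTop R] with S hS
    exact hmono hR (lt_of_lt_of_le hR hS) hS
  have hL0 : 0 ≤ L := by
    refine ge_of_tendsto hlim ?_
    filter_upwards [Filter.eventually_ge_atTop (1:ℝ)] with S hS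
    exact hnonneg S (lt_of_lt_of_le one_pos hS)
  have hLzero : L = 0 := by
    by_contra hL
    have hLpos : 0 < L := lt_of_le_of_ne hL0 (Ne.symm hL)
    -- eventually E R > L/2
    have h1 : ∀ᶠ R in Filter.atTop, L / 2 < E R :=
      hlim.eventually_const_lt (by linarith)
    -- eventually C * R ^ (-(α/2)) < ((n:ℝ)-1) * L / 2
    have h2 : ∀ᶠ R in Filter.atTop, C * R ^ (-(α/2)) < ((n:ℝ) - 1) * L / 2 := by
      have ht : Filter.Tendsto (fun R : ℝ => C * R ^ (-(α/2))) Filter.atTop (nhds 0) := by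
        have := tendsto_rpow_neg_atTop (by linarith : 0 < α/2)
        simpa using this.const_mul C
      refine ht.eventually_lt_const ?_
      have hn1 : (1:ℝ) ≤ (n:ℝ) - 1 := by
        have : (2:ℝ) ≤ (n:ℝ) := by exact_mod_cast hn
        linarith
      nlinarith
    obtain ⟨a, ha⟩ := Filter.eventually_atTop.mp h1
    obtain ⟨b, hb⟩ := Filter.eventually_atTop.mp h2
    set R₂ : ℝ := max (max a b) (max R₁ 1) with hR₂def
    have hR₂pos : (0:ℝ) < R₂ :=
      lt_of_lt_of_le one_pos (le_trans (le_max_right R₁ 1) (le_max_right _ _))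
    have hderiv : ∀ x, R₂ ≤ x → L / 2 * x⁻¹ ≤ deriv E x := by
      intro x hx
      have hxpos : 0 < x := lt_of_lt_of_le hR₂pos hx
      have hxR₁ : R₁ ≤ x := le_trans (le_trans (le_max_left R₁ 1) (le_max_right _ _)) hx
      have hEx : L / 2 < E x := ha x (le_trans (le_trans (le_max_left a b) (le_max_left _ _)) hx)
      have hCx : C * x ^ (-(α/2)) < ((n:ℝ) - 1) * L / 2 :=
        hb x (le_trans (le_trans (le_max_right a b) (le_max_left _ _)) hx)
      have hkey := hineq x hxR₁
      have hn2 : (2:ℝ) ≤ (n:ℝ) := by exact_mod_cast hn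
      have hxd : L / 2 ≤ x * deriv E x := by nlinarith [hEx, hCx, hkey]
      rw [← sub_nonneg]
      have : deriv E x - L / 2 * x⁻¹ = (x * deriv E x - L / 2) / x := by
        field_simp
      rw [this]
      exact div_nonneg (by linarith) hxpos.le
    -- φ := E - (L/2) log is monotone on [R₂, ∞)
    set φ : ℝ → ℝ := fun R => E R - L / 2 * Real.log R with hφdef
    have hφderiv : ∀ x, 0 < x → HasDerivAt φ (deriv E x - L / 2 * x⁻¹) x := by
      intro x hx
      exact ((hdiff x hx).hasDerivAt).sub ((Real.hasDerivAt_log hx.ne').const_mul (L/2))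
    have hφmono : MonotoneOn φ (Set.Ici R₂) := by
      refine monotoneOn_of_deriv_nonneg (convex_Ici R₂) ?_ ?_ ?_
      · intro x hx
        exact ((hφderiv x (lt_of_lt_of_le hR₂pos hx)).continuousAt).continuousWithinAt
      · intro x hx
        rw [interior_Ici] at hx
        exact ((hφderiv x (lt_of_lt_of_le hR₂pos hx.le)).differentiableAt).differentiableWithinAt
      · intro x hx
        rw [interior_Ici] at hx
        rw [(hφderiv x (lt_of_lt_of_le hR₂pos hx.le)).deriv]
        have := hderiv x hx.le
        linarith
    -- hence L/2 * log R is bounded above, contradiction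
    have hbound : ∀ R ≥ R₂, L / 2 * Real.log R ≤ L - φ R₂ := by
      intro R hR
      have := hφmono (Set.self_mem_Ici) (Set.mem_Ici.mpr hR) hR
      have hER : E R ≤ L := hEle R (lt_of_lt_of_le hR₂pos hR)
      simp only [hφdef] at this ⊢
      linarith
    have htop : Filter.Tendsto (fun R : ℝ => L / 2 * Real.log R) Filter.atTop Filter.atTop :=
      Real.tendsto_log_atTop.const_mul_atTop (by linarith)
    obtain ⟨R, hRR₂, hRbig⟩ :=
      ((Filter.eventually_ge_atTop R₂).and
        (htop.eventually_gt_atTop (L - φ R₂))).exists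
    exact absurd (hbound R hRR₂) (not_le.mpr hRbig)
  refine ⟨hLzero, fun R hR => le_antisymm ?_ (hnonneg R hR)⟩
  rw [← hLzero]
  exact hEle R hR
end
end

section
/- Under the hypothesis e(f)·e''(f)(p) ≤ C/R^{4n+α} (C > 0, α > 0, R = |p| large) for a harmonic map f: ℂⁿ → N to a Kähler manifold, the boundary term satisfies (R/2)∫_{∂B_R}(|f_*(∂/∂r)|² - ⟨J'f_*(∂/∂r), f_*(J∂/∂r)⟩) dσ ≥ -(C'/2)·R^{-α/2} for some constant C' > 0 and all large R. -/
open MeasureTheory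

noncomputable section

variable {n : ℕ} {F : Type*} [NormedAddCommGroup F] [NormedSpace ℝ F]

/-! ### Auxiliary material for the proof -/

section PSD
variable {F : Type*} [NormedAddCommGroup F] [NormedSpace ℝ F]

lemma psd_expand (g : F →L[ℝ] F →L[ℝ] ℝ) (u v : F) (t : ℝ) :
    g (u + t • v) (u + t • v) = g v v * (t*t) + (g u v + g v u) * t + g u u := by
  simp only [map_add, _root_.map_smul, ContinuousLinearMap.add_apply, ContinuousLinearMap.smul_apply,
    smul_eq_mul]
  ring

lemma psd_cs (g : F →L[ℝ] F →L[ℝ] ℝ) (hs : ∀ u v, g u v = g v u)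
    (hp : ∀ v, 0 ≤ g v v) (u v : F) : (g u v)^2 ≤ g u u * g v v := by
  have h : ∀ t : ℝ, 0 ≤ g v v * (t*t) + (2 * g u v) * t + g u u := by
    intro t
    have e := psd_expand g u v t
    rw [hs v u] at e
    have := hp (u + t • v)
    nlinarith [this]
  have hd := discrim_le_zero h
  rw [discrim] at hd
  nlinarith [hd]

lemma psd_abs_le (g : F →L[ℝ] F →L[ℝ] ℝ) (hs : ∀ u v, g u v = g v u)
    (hp : ∀ v, 0 ≤ g v v) (u v : F) :
    |g u v| ≤ Real.sqrt (g u u) * Real.sqrt (g v v) := by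
  have := psd_cs g hs hp u v
  calc |g u v| = Real.sqrt ((g u v)^2) := (Real.sqrt_sq_eq_abs _).symm
    _ ≤ Real.sqrt (g u u * g v v) := Real.sqrt_le_sqrt this
    _ = _ := Real.sqrt_mul (hp u) _

lemma psd_sqrt_triangle (g : F →L[ℝ] F →L[ℝ] ℝ) (hs : ∀ u v, g u v = g v u)
    (hp : ∀ v, 0 ≤ g v v) (u v : F) :
    Real.sqrt (g (u + v) (u + v)) ≤ Real.sqrt (g u u) + Real.sqrt (g v v) := by
  have h1 : g (u + v) (u + v) = g u u + 2 * (g u v) + g v v := by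
    simpa [hs v u] using by linarith [psd_expand g u v 1]
  have h2 : g u v ≤ Real.sqrt (g u u) * Real.sqrt (g v v) :=
    le_trans (le_abs_self _) (psd_abs_le g hs hp u v)
  have h3 : g (u + v) (u + v) ≤ (Real.sqrt (g u u) + Real.sqrt (g v v))^2 := by
    have s1 := Real.sq_sqrt (hp u)
    have s2 := Real.sq_sqrt (hp v)
    nlinarith [h1, h2]
  calc Real.sqrt (g (u + v) (u + v)) ≤ Real.sqrt ((Real.sqrt (g u u) + Real.sqrt (g v v))^2) :=
        Real.sqrt_le_sqrt h3
    _ = _ := Real.sqrt_sq (by positivity)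

lemma psd_quad_sum_le {ι : Type*} [Fintype ι] (g : F →L[ℝ] F →L[ℝ] ℝ)
    (hs : ∀ u v, g u v = g v u) (hp : ∀ v, 0 ≤ g v v) (c : ι → ℝ) (v : ι → F) :
    g (∑ j, c j • v j) (∑ j, c j • v j) ≤ (∑ j, c j ^ 2) * (∑ j, g (v j) (v j)) := by
  have expand : g (∑ j, c j • v j) (∑ j, c j • v j)
      = ∑ i, ∑ j, c i * c j * g (v i) (v j) := by
    rw [map_sum]
    simp only [ContinuousLinearMap.sum_apply, _root_.map_smul, ContinuousLinearMap.smul_apply,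
      map_sum, ContinuousLinearMap.coe_smul', Pi.smul_apply, smul_eq_mul, Finset.mul_sum]
    refine Finset.sum_congr rfl fun i _ => ?_
    refine Finset.sum_congr rfl fun j _ => ?_
    rw [hs (v j) (v i)]; ring
  rw [expand]
  calc ∑ i, ∑ j, c i * c j * g (v i) (v j)
      ≤ ∑ i, ∑ j, (|c i| * Real.sqrt (g (v i) (v i))) * (|c j| * Real.sqrt (g (v j) (v j))) := by
        refine Finset.sum_le_sum fun i _ => Finset.sum_le_sum fun j _ => ?_
        have h := psd_abs_le g hs hp (v i) (v j)
        calc c i * c j * g (v i) (v j) ≤ |c i * c j * g (v i) (v j)| := le_abs_self _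
          _ = |c i| * |c j| * |g (v i) (v j)| := by rw [abs_mul, abs_mul]
          _ ≤ |c i| * |c j| * (Real.sqrt (g (v i) (v i)) * Real.sqrt (g (v j) (v j))) := by
              have h0 : (0:ℝ) ≤ |c i| * |c j| := by positivity
              nlinarith [h, h0, abs_nonneg (g (v i) (v j))]
          _ = _ := by ring
    _ = (∑ j, |c j| * Real.sqrt (g (v j) (v j)))^2 := by
        rw [sq, Finset.sum_mul_sum]
    _ ≤ (∑ j, |c j|^2) * (∑ j, (Real.sqrt (g (v j) (v j)))^2) :=
        Finset.sum_mul_sq_le_sq_mul_sq _ _ _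
    _ = (∑ j, c j ^ 2) * (∑ j, g (v j) (v j)) := by
        congr 1
        · exact Finset.sum_congr rfl fun j _ => sq_abs _
        · exact Finset.sum_congr rfl fun j _ => Real.sq_sqrt (hp _)

end PSD

section Frame
variable {n : ℕ}

/-- The real orthonormal frame `{eᵢ, Jeᵢ}` of `ℂⁿ`, indexed by `Fin n × Bool`. -/
def wfr {n : ℕ} (j : Fin n × Bool) : Cn n :=
  if j.2 then Complex.I • sframe j.1 else sframe j.1

/-- The real coordinates of a vector of `ℂⁿ` in the frame `wfr`. -/
def cfr {n : ℕ} (x : Cn n) (j : Fin n × Bool) : ℝ :=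
  if j.2 then (x j.1).im else (x j.1).re

lemma re_im_smul (z : ℂ) (v : Cn n) : z.re • v + z.im • (Complex.I • v) = z • v := by
  have h1 : z.re • v = (z.re : ℂ) • v := (Complex.coe_smul _ _).symm
  have h2 : z.im • (Complex.I • v) = ((z.im : ℂ) * Complex.I) • v := by
    rw [← smul_smul, Complex.coe_smul]
  rw [h1, h2, ← add_smul, Complex.re_add_im]

lemma euclid_repr (x : Cn n) : ∑ i, (x i) • EuclideanSpace.single i (1:ℂ) = x := by
  have := (EuclideanSpace.basisFun (Fin n) ℂ).sum_repr x
  simpa [EuclideanSpace.basisFun_repr, EuclideanSpace.basisFun_apply] using this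

lemma sum_cfr_smul (x : Cn n) : ∑ j, cfr x j • wfr j = x := by
  rw [Fintype.sum_prod_type]
  have h : ∀ i : Fin n, ∑ b : Bool, cfr x (i, b) • wfr (i, b) = (x i) • sframe i := by
    intro i
    rw [Fintype.sum_bool]
    simp only [cfr, wfr, if_true, if_false]
    rw [add_comm]
    exact re_im_smul (x i) (sframe i)
  rw [Finset.sum_congr rfl fun i _ => h i]
  exact euclid_repr x

lemma sum_cfr_sq (x : Cn n) : ∑ j, (cfr x j)^2 = ‖x‖^2 := by
  rw [Fintype.sum_prod_type]
  have hx : ‖x‖^2 = ∑ i, ‖x i‖^2 := by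
    rw [EuclideanSpace.norm_eq, Real.sq_sqrt (by positivity)]
  rw [hx]
  refine Finset.sum_congr rfl fun i _ => ?_
  rw [Fintype.sum_bool]
  simp only [cfr, if_true, Bool.false_eq_true, if_false]
  rw [Complex.sq_norm, Complex.normSq_apply]
  ring

lemma abs_cfr_le (x : Cn n) (j : Fin n × Bool) : |cfr x j| ≤ ‖x‖ := by
  have hi : ‖x j.1‖ ≤ ‖x‖ := by
    rw [EuclideanSpace.norm_eq]
    have h : ‖x j.1‖^2 ≤ ∑ i, ‖x i‖^2 :=
      Finset.single_le_sum (f := fun i => ‖x i‖^2) (fun _ _ => by positivity) (Finset.mem_univ _)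
    calc ‖x j.1‖ = Real.sqrt (‖x j.1‖^2) := by rw [Real.sqrt_sq (norm_nonneg _)]
      _ ≤ _ := Real.sqrt_le_sqrt h
  refine le_trans ?_ hi
  unfold cfr
  split
  · exact (Complex.abs_im_le_norm _)
  · exact (Complex.abs_re_le_norm _)

lemma norm_wfr (j : Fin n × Bool) : ‖wfr j‖ = 1 := by
  unfold wfr sframe
  split <;> simp [norm_smul, EuclideanSpace.norm_single]

lemma cfr_wfr (k j : Fin n × Bool) : cfr (wfr k) j = if k = j then 1 else 0 := by
  rcases k with ⟨i', b'⟩; rcases j with ⟨i, b⟩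
  simp only [cfr, wfr]
  by_cases hii : i' = i
  · subst hii
    cases b' <;> cases b <;>
      simp [sframe, EuclideanSpace.single_apply, Prod.ext_iff]
  · cases b' <;> cases b <;>
      simp [sframe, EuclideanSpace.single_apply, Ne.symm hii, Prod.ext_iff, hii]

end Frame

section Pointwise
variable {n : ℕ} {F : Type*} [NormedAddCommGroup F] [NormedSpace ℝ F]

lemma g_nonneg (K : KahlerStructure F) (p : F) (v : F) : 0 ≤ K.g p v v := by
  rcases eq_or_ne v 0 with rfl | hv
  · simp
  · exact (K.g_posdef p v hv).le

lemma sum_frame_energy (K : KahlerStructure F) (f : Cn n → F) (x : Cn n) :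
    ∑ j : Fin n × Bool, K.g (f x) (fderiv ℝ f x (wfr j)) (fderiv ℝ f x (wfr j))
      = 2 * energyDensity K.g f x := by
  rw [Fintype.sum_prod_type, energyDensity, ← mul_assoc]
  norm_num
  refine Finset.sum_congr rfl fun i _ => ?_
  simp only [wfr, if_true, Bool.false_eq_true, if_false]
  ring

lemma dbar_smul_I (K : KahlerStructure F) (f : Cn n → F) (x : Cn n) (v : Cn n) :
    dbar K f x (Complex.I • v) = -(K.J (f x) (dbar K f x v)) := by
  have hI : Complex.I • (Complex.I • v) = -v := by
    rw [smul_smul, Complex.I_mul_I, neg_one_smul]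
  rw [dbar, dbar, hI, map_neg, map_sub, K.J_sq]
  abel

lemma g_dbar_smul_I (K : KahlerStructure F) (f : Cn n → F) (x : Cn n) (v : Cn n) :
    K.g (f x) (dbar K f x (Complex.I • v)) (dbar K f x (Complex.I • v))
      = K.g (f x) (dbar K f x v) (dbar K f x v) := by
  simp only [dbar_smul_I, map_neg, ContinuousLinearMap.neg_apply, neg_neg]
  exact K.J_isom _ _ _

lemma sum_frame_dbar (K : KahlerStructure F) (f : Cn n → F) (x : Cn n) :
    ∑ j : Fin n × Bool, K.g (f x) (dbar K f x (wfr j)) (dbar K f x (wfr j))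
      = 8 * dbarDensity K f x := by
  rw [Fintype.sum_prod_type, dbarDensity, ← mul_assoc]
  norm_num [Finset.mul_sum]
  refine Finset.sum_congr rfl fun i _ => ?_
  simp only [wfr, if_true, Bool.false_eq_true, if_false, g_dbar_smul_I]
  ring

end Pointwise

section Pointwise2
variable {n : ℕ} {F : Type*} [NormedAddCommGroup F] [NormedSpace ℝ F]

lemma energyDensity_nonneg (K : KahlerStructure F) (f : Cn n → F) (x : Cn n) :
    0 ≤ energyDensity K.g f x := by
  rw [energyDensity]
  refine mul_nonneg (by norm_num) (Finset.sum_nonneg fun i _ =>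
    add_nonneg (g_nonneg K _ _) (g_nonneg K _ _))

lemma dbarDensity_nonneg (K : KahlerStructure F) (f : Cn n → F) (x : Cn n) :
    0 ≤ dbarDensity K f x := by
  rw [dbarDensity]
  refine mul_nonneg (by norm_num) (Finset.sum_nonneg fun i _ => g_nonneg K _ _)

/-- The pointwise lower bound on the integrand via Cauchy-Schwarz. -/
lemma pointwise_ge (K : KahlerStructure F) (f : Cn n → F) (x : Cn n) (hx : x ≠ 0) :
    -(4 * Real.sqrt (energyDensity K.g f x * dbarDensity K f x)) ≤
      K.g (f x) (fderiv ℝ f x (‖x‖⁻¹ • x)) (fderiv ℝ f x (‖x‖⁻¹ • x))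
        - K.g (f x) (K.J (f x) (fderiv ℝ f x (‖x‖⁻¹ • x)))
            (fderiv ℝ f x (Complex.I • (‖x‖⁻¹ • x))) := by
  classical
  set p := f x with hpdef
  set gx : F →L[ℝ] F →L[ℝ] ℝ := K.g p with hgx
  have hs : ∀ u v, gx u v = gx v u := fun u v => K.g_symm p u v
  have hp : ∀ v, 0 ≤ gx v v := fun v => g_nonneg K p v
  set D := fderiv ℝ f x with hD
  set u : Cn n := ‖x‖⁻¹ • x with hu
  have hu1 : ∑ j, (cfr u j)^2 = 1 := by
    rw [sum_cfr_sq, hu, norm_smul, norm_inv, norm_norm,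
      inv_mul_cancel₀ (norm_ne_zero_iff.2 hx)]
    norm_num
  have hE := energyDensity_nonneg K f x
  have hE'' := dbarDensity_nonneg K f x
  -- a and b
  set a : F := D u with ha
  set b : F := D (Complex.I • u) with hb
  -- bound 1 : gx a a ≤ 2 * E
  have hDu : a = ∑ j, cfr u j • D (wfr j) := by
    rw [ha]
    conv_lhs => rw [← sum_cfr_smul u]
    rw [map_sum]
    exact Finset.sum_congr rfl fun j _ => by rw [_root_.map_smul]
  have hA2E : gx a a ≤ 2 * energyDensity K.g f x := by
    rw [hDu]
    have h := psd_quad_sum_le gx hs hp (cfr u) (fun j => D (wfr j))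
    rw [hu1, one_mul] at h
    calc gx (∑ j, cfr u j • D (wfr j)) (∑ j, cfr u j • D (wfr j))
        ≤ ∑ j, gx (D (wfr j)) (D (wfr j)) := h
      _ = 2 * energyDensity K.g f x := sum_frame_energy K f x
  -- bound 2 : gx d d ≤ 8 * E'' where d = dbar at u
  set d : F := dbar K f x u with hd
  have hdbar_lin : d = ∑ j, cfr u j • dbar K f x (wfr j) := by
    rw [hd, dbar]
    conv_lhs => rw [← sum_cfr_smul u]
    rw [Finset.smul_sum]
    have hIs : ∀ j : Fin n × Bool, Complex.I • (cfr u j • wfr j)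
        = cfr u j • (Complex.I • wfr j) := fun j => smul_comm _ _ _
    rw [Finset.sum_congr rfl fun j _ => hIs j]
    simp only [map_sum, _root_.map_smul]
    rw [← Finset.sum_sub_distrib]
    exact Finset.sum_congr rfl fun j _ => by rw [dbar, smul_sub]
  have hd8E : gx d d ≤ 8 * dbarDensity K f x := by
    rw [hdbar_lin]
    have h := psd_quad_sum_le gx hs hp (cfr u) (fun j => dbar K f x (wfr j))
    rw [hu1, one_mul] at h
    calc gx (∑ j, cfr u j • dbar K f x (wfr j)) (∑ j, cfr u j • dbar K f x (wfr j))
        ≤ ∑ j, gx (dbar K f x (wfr j)) (dbar K f x (wfr j)) := h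
      _ = 8 * dbarDensity K f x := sum_frame_dbar K f x
  -- assemble
  have hdeq : b - K.J p a = d := by rw [hd, dbar, ← hb, ← ha]
  have hJA : gx (K.J p a) (K.J p a) = gx a a := K.J_isom p a a
  have h1 : gx (K.J p a) b ≤ Real.sqrt (gx a a) * Real.sqrt (gx b b) := by
    have := le_trans (le_abs_self _) (psd_abs_le gx hs hp (K.J p a) b)
    rwa [hJA] at this
  have h2 : Real.sqrt (gx b b) ≤ Real.sqrt (gx a a) + Real.sqrt (gx d d) := by
    have htri := psd_sqrt_triangle gx hs hp (K.J p a) (b - K.J p a)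
    rw [add_sub_cancel, hJA, hdeq] at htri
    exact htri
  have h3 : Real.sqrt (gx a a) ≤ Real.sqrt (2 * energyDensity K.g f x) :=
    Real.sqrt_le_sqrt hA2E
  have h4 : Real.sqrt (gx d d) ≤ Real.sqrt (8 * dbarDensity K f x) :=
    Real.sqrt_le_sqrt hd8E
  have h5 : Real.sqrt (gx a a) ^ 2 = gx a a := Real.sq_sqrt (hp a)
  have h6 : Real.sqrt (2 * energyDensity K.g f x) * Real.sqrt (8 * dbarDensity K f x)
      = 4 * Real.sqrt (energyDensity K.g f x * dbarDensity K f x) := by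
    rw [← Real.sqrt_mul (by positivity)]
    rw [show 2 * energyDensity K.g f x * (8 * dbarDensity K f x)
        = 4^2 * (energyDensity K.g f x * dbarDensity K f x) by ring]
    rw [Real.sqrt_mul (by positivity), Real.sqrt_sq (by norm_num)]
  have sA0 := Real.sqrt_nonneg (gx a a)
  have sd0 := Real.sqrt_nonneg (gx d d)
  have sB0 := Real.sqrt_nonneg (gx b b)
  have s2E0 := Real.sqrt_nonneg (2 * energyDensity K.g f x)
  have s8E0 := Real.sqrt_nonneg (8 * dbarDensity K f x)
  have key : gx (K.J p a) b ≤ gx a a + 4 * Real.sqrt (energyDensity K.g f x * dbarDensity K f x) := by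
    calc gx (K.J p a) b ≤ Real.sqrt (gx a a) * Real.sqrt (gx b b) := h1
      _ ≤ Real.sqrt (gx a a) * (Real.sqrt (gx a a) + Real.sqrt (gx d d)) := by
          exact mul_le_mul_of_nonneg_left h2 sA0
      _ = gx a a + Real.sqrt (gx a a) * Real.sqrt (gx d d) := by
          rw [mul_add]; rw [← sq, h5]
      _ ≤ gx a a + Real.sqrt (2 * energyDensity K.g f x) * Real.sqrt (8 * dbarDensity K f x) := by
          have := mul_le_mul h3 h4 sd0 s2E0
          linarith
      _ = _ := by rw [h6]
  -- conclude
  linarith [key]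

end Pointwise2

section MeasurePart
open Metric Set
variable {n : ℕ}

lemma cfr_add (x y : Cn n) (j : Fin n × Bool) : cfr (x + y) j = cfr x j + cfr y j := by
  unfold cfr
  split <;> simp [PiLp.add_apply]

lemma cfr_smul (r : ℝ) (x : Cn n) (j : Fin n × Bool) : cfr (r • x) j = r * cfr x j := by
  unfold cfr
  split <;> simp [PiLp.smul_apply, Complex.smul_re, Complex.smul_im]

lemma cfr_sum {ι : Type*} (s : Finset ι) (v : ι → Cn n) (j : Fin n × Bool) :
    cfr (∑ i ∈ s, v i) j = ∑ i ∈ s, cfr (v i) j := by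
  classical
  induction s using Finset.induction with
  | empty => simp [cfr]
  | insert _ _ h ih => rw [Finset.sum_insert h, Finset.sum_insert h, cfr_add, ih]

lemma lipschitz_radial : LipschitzOnWith 2 (fun x : Cn n => ‖x‖⁻¹ • x) {x : Cn n | 1 ≤ ‖x‖} := by
  apply LipschitzOnWith.of_dist_le_mul
  intro x hx y hy
  simp only [Set.mem_setOf_eq] at hx hy
  have hx0 : (0:ℝ) < ‖x‖ := lt_of_lt_of_le one_pos hx
  have hy0 : (0:ℝ) < ‖y‖ := lt_of_lt_of_le one_pos hy
  rw [dist_eq_norm, dist_eq_norm]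
  have key : ‖x‖⁻¹ • x - ‖y‖⁻¹ • y = ‖x‖⁻¹ • (x - y) + (‖x‖⁻¹ - ‖y‖⁻¹) • y := by
    rw [smul_sub, sub_smul]; abel
  rw [key]
  have h1 : ‖‖x‖⁻¹ • (x - y)‖ ≤ ‖x - y‖ := by
    rw [norm_smul, norm_inv, norm_norm]
    have hinv : ‖x‖⁻¹ ≤ 1 := by
      rw [inv_le_one_iff₀]; right; exact hx
    nlinarith [norm_nonneg (x - y)]
  have h2 : ‖(‖x‖⁻¹ - ‖y‖⁻¹) • y‖ ≤ ‖x - y‖ := by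
    rw [norm_smul, Real.norm_eq_abs]
    have e : ‖x‖⁻¹ - ‖y‖⁻¹ = (‖y‖ - ‖x‖) / (‖x‖ * ‖y‖) := by
      field_simp
    rw [e, abs_div, abs_mul, abs_of_pos hx0, abs_of_pos hy0]
    have habs : |‖y‖ - ‖x‖| ≤ ‖x - y‖ := by
      rw [abs_sub_comm]
      exact abs_norm_sub_norm_le x y
    calc |‖y‖ - ‖x‖| / (‖x‖ * ‖y‖) * ‖y‖ = |‖y‖ - ‖x‖| / ‖x‖ := by
          field_simp
      _ ≤ |‖y‖ - ‖x‖| := div_le_self (abs_nonneg _) hx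
      _ ≤ ‖x - y‖ := habs
  calc ‖‖x‖⁻¹ • (x - y) + (‖x‖⁻¹ - ‖y‖⁻¹) • y‖
      ≤ ‖‖x‖⁻¹ • (x - y)‖ + ‖(‖x‖⁻¹ - ‖y‖⁻¹) • y‖ := norm_add_le _ _
    _ ≤ 2 * ‖x - y‖ := by push_cast; linarith

end MeasurePart

section MeasurePart2
open Metric Set
variable {n : ℕ}

lemma sphere_hd_lt_top (hn : 0 < n) :
    μH[2*(n:ℝ)-1] (Metric.sphere (0:Cn n) 1) < ⊤ := by
  classical
  set m : ℕ := 2*n - 1 with hm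
  have h12n : 1 ≤ 2*n := by omega
  have hdm : (2*(n:ℝ)-1) = (m:ℝ) := by
    rw [hm]
    push_cast [Nat.cast_sub h12n]
    ring
  rw [hdm]
  have hd0 : (0:ℝ) ≤ (m:ℝ) := Nat.cast_nonneg m
  have hcard : ∀ j : Fin n × Bool, Fintype.card {k : Fin n × Bool // k ≠ j} = m := by
    intro j
    have h1 := Fintype.card_subtype_compl (fun k : Fin n × Bool => k = j)
    rw [Fintype.card_subtype_eq] at h1
    simpa [Fintype.card_prod, Fintype.card_bool, Fintype.card_fin, hm, mul_comm] using h1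
  let e : (j : Fin n × Bool) → (Fin m ≃ {k : Fin n × Bool // k ≠ j}) :=
    fun j => (Fintype.equivFinOfCardEq (hcard j)).symm
  let sg : Bool → ℝ := fun s => if s then 1 else -1
  let A : Fin n × Bool → Bool → (Fin m → ℝ) → Cn n :=
    fun j s c => sg s • wfr j + ∑ k, c k • wfr (e j k : Fin n × Bool)
  have habs_sg : ∀ s, |sg s| = 1 := by intro s; cases s <;> simp [sg]
  -- sum splitting along e j
  have hsplit : ∀ (j : Fin n × Bool) (G : (Fin n × Bool) → Cn n),
      ∑ j', G j' = G j + ∑ k, G (e j k : Fin n × Bool) := by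
    intro j G
    have h1 : ∑ k, G (e j k : Fin n × Bool)
        = ∑ y : {k : Fin n × Bool // k ≠ j}, G (y : Fin n × Bool) :=
      Equiv.sum_comp (e j) (fun y => G (y : Fin n × Bool))
    have h2 : ∑ y : {k : Fin n × Bool // k ≠ j}, G (y : Fin n × Bool)
        = ∑ j' ∈ Finset.univ.erase j, G j' :=
      (Finset.sum_subtype (p := fun k => k ≠ j) (Finset.univ.erase j)
        (fun k => by simp) G).symm
    rw [h1, h2, Finset.add_sum_erase _ G (Finset.mem_univ j)]
  -- coordinate j of A j s c is ±1
  have hAcoord : ∀ j s c, cfr (A j s c) j = sg s := by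
    intro j s c
    show cfr (sg s • wfr j + ∑ k, c k • wfr (e j k : Fin n × Bool)) j = sg s
    rw [cfr_add, cfr_smul, cfr_sum, cfr_wfr, if_pos rfl]
    have hz : ∀ k : Fin m, cfr (c k • wfr (e j k : Fin n × Bool)) j = 0 := by
      intro k
      rw [cfr_smul, cfr_wfr, if_neg (e j k).prop, mul_zero]
    rw [Finset.sum_congr rfl fun k _ => hz k]
    simp
  have hA1 : ∀ j s c, 1 ≤ ‖A j s c‖ := by
    intro j s c
    have := abs_cfr_le (A j s c) j
    rw [hAcoord j s c] at this
    calc (1:ℝ) = |sg s| := (habs_sg s).symm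
      _ ≤ ‖A j s c‖ := this
  -- A is Lipschitz
  have hAlip : ∀ j s, LipschitzWith (m : NNReal) (A j s) := by
    intro j s
    apply LipschitzWith.of_dist_le_mul
    intro c c'
    have hdiff : A j s c - A j s c' = ∑ k, (c k - c' k) • wfr (e j k : Fin n × Bool) := by
      show (sg s • wfr j + ∑ k, c k • wfr (e j k : Fin n × Bool))
          - (sg s • wfr j + ∑ k, c' k • wfr (e j k : Fin n × Bool)) = _
      rw [add_sub_add_left_eq_sub, ← Finset.sum_sub_distrib]
      exact Finset.sum_congr rfl fun k _ => (sub_smul _ _ _).symm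
    rw [dist_eq_norm, hdiff]
    calc ‖∑ k, (c k - c' k) • wfr (e j k : Fin n × Bool)‖
        ≤ ∑ k, ‖(c k - c' k) • wfr (e j k : Fin n × Bool)‖ := norm_sum_le _ _
      _ = ∑ k : Fin m, |c k - c' k| := by
          refine Finset.sum_congr rfl fun k _ => ?_
          rw [norm_smul, norm_wfr, mul_one, Real.norm_eq_abs]
      _ ≤ ∑ _k : Fin m, dist c c' := by
          refine Finset.sum_le_sum fun k _ => ?_
          rw [← Real.dist_eq]
          exact dist_le_pi_dist c c' k
      _ = (m : NNReal) * dist c c' := by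
          rw [Finset.sum_const, Finset.card_univ, Fintype.card_fin, nsmul_eq_mul]
          simp
  -- the radial projection
  set π : Cn n → Cn n := fun y => ‖y‖⁻¹ • y with hπ
  -- covering
  have hcov : Metric.sphere (0:Cn n) 1 ⊆
      ⋃ q : (Fin n × Bool) × Bool, (π ∘ A q.1 q.2) '' (closedBall (0 : Fin m → ℝ) (2*n)) := by
    intro x hx
    have hx1 : ‖x‖ = 1 := by simpa using hx
    have hsum : ∑ j, (cfr x j)^2 = 1 := by rw [sum_cfr_sq, hx1]; norm_num
    have h2n0 : (0:ℝ) < 2*n := by positivity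
    -- find a large coordinate
    have hex : ∃ j : Fin n × Bool, 1/(2*(n:ℝ)) ≤ (cfr x j)^2 := by
      by_contra hcon
      push_neg at hcon
      have hne : (Finset.univ : Finset (Fin n × Bool)).Nonempty := by
        refine Finset.univ_nonempty_iff.mpr ?_
        have : Nonempty (Fin n) := ⟨⟨0, hn⟩⟩
        infer_instance
      have hlt := Finset.sum_lt_sum_of_nonempty hne (fun j _ => hcon j)
      rw [hsum, Finset.sum_const, Finset.card_univ] at hlt
      have hcard2 : Fintype.card (Fin n × Bool) = 2*n := by
        simp [Fintype.card_prod, Fintype.card_bool, Fintype.card_fin, mul_comm]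
      rw [hcard2, nsmul_eq_mul] at hlt
      push_cast at hlt
      rw [mul_one_div, div_self (ne_of_gt h2n0)] at hlt
      exact lt_irrefl _ hlt
    obtain ⟨j, hj⟩ := hex
    set a : ℝ := cfr x j with ha
    have hnR : (0:ℝ) < (n:ℝ) := by exact_mod_cast hn
    have ha0 : a ≠ 0 := by
      intro h
      rw [h] at hj
      simp at hj
      have : (0:ℝ) < (↑n)⁻¹ * 2⁻¹ := by positivity
      linarith
    have habs1 : |a| ≤ 1 := by
      have := abs_cfr_le x j
      rwa [hx1] at this
    have hainv : |a|⁻¹ ≤ 2*n := by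
      have h2na : 1 ≤ 2*(n:ℝ)*|a| := by
        have hj' : 1 ≤ a^2 * (2*(n:ℝ)) := (div_le_iff₀ h2n0).mp hj
        nlinarith [sq_abs a, abs_nonneg a, hj',
          mul_nonneg (le_of_lt h2n0) (mul_nonneg (abs_nonneg a) (sub_nonneg.2 habs1))]
      rw [inv_eq_one_div, div_le_iff₀ (abs_pos.2 ha0)]
      linarith
    set s : Bool := decide (0 < a) with hs
    have hsgn : sg s = |a|⁻¹ * a := by
      rcases lt_or_gt_of_ne ha0 with hneg | hpos
      · have hs' : s = false := by
          rw [hs, decide_eq_false_iff_not]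
          exact not_lt.mpr hneg.le
        rw [hs']
        show (-1 : ℝ) = |a|⁻¹ * a
        rw [abs_of_neg hneg, inv_neg, neg_mul, inv_mul_cancel₀ ha0]
      · have hs' : s = true := by
          rw [hs, decide_eq_true_eq]
          exact hpos
        rw [hs']
        show (1 : ℝ) = |a|⁻¹ * a
        rw [abs_of_pos hpos, inv_mul_cancel₀ ha0]
    refine Set.mem_iUnion.mpr ⟨(j, s), ?_⟩
    set c : Fin m → ℝ := fun k => |a|⁻¹ * cfr x (e j k : Fin n × Bool) with hc
    refine ⟨c, ?_, ?_⟩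
    · rw [mem_closedBall_iff_norm, sub_zero]
      refine (pi_norm_le_iff_of_nonneg (by positivity)).mpr fun k => ?_
      rw [Real.norm_eq_abs, hc, abs_mul, abs_inv, abs_abs]
      calc |a|⁻¹ * |cfr x (e j k : Fin n × Bool)| ≤ |a|⁻¹ * 1 := by
            have := abs_cfr_le x (e j k : Fin n × Bool)
            rw [hx1] at this
            exact mul_le_mul_of_nonneg_left this (by positivity)
        _ ≤ 2*n := by rw [mul_one]; exact hainv
    · -- π (A j s c) = x
      have hAeq : A j s c = |a|⁻¹ • x := by
        conv_rhs => rw [← sum_cfr_smul (|a|⁻¹ • x)]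
        rw [hsplit j (fun j' => cfr (|a|⁻¹ • x) j' • wfr j')]
        show A j s c = cfr (|a|⁻¹ • x) j • wfr j + _
        have h1 : cfr (|a|⁻¹ • x) j • wfr j = sg s • wfr j := by
          rw [cfr_smul, ← ha, ← hsgn]
        have h2 : ∀ k : Fin m, cfr (|a|⁻¹ • x) (e j k : Fin n × Bool) • wfr (e j k : Fin n × Bool)
            = c k • wfr (e j k : Fin n × Bool) := by
          intro k
          rw [cfr_smul]
        rw [h1, Finset.sum_congr rfl fun k _ => h2 k]
      have hnormA : ‖A j s c‖ = |a|⁻¹ := by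
        rw [hAeq, norm_smul, Real.norm_eq_abs, abs_inv, abs_abs, hx1, mul_one]
      show π (A j s c) = x
      rw [hπ]
      show ‖A j s c‖⁻¹ • A j s c = x
      rw [hnormA, hAeq, smul_smul, inv_inv, mul_inv_cancel₀ (abs_ne_zero.2 ha0), one_smul]
  -- measure estimate
  have hlipcomp : ∀ q : (Fin n × Bool) × Bool,
      LipschitzOnWith (2 * m) (π ∘ A q.1 q.2) (closedBall (0 : Fin m → ℝ) (2*n)) := by
    intro q
    refine LipschitzOnWith.comp (lipschitz_radial (n := n)) ((hAlip q.1 q.2).lipschitzOnWith)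
      fun c _ => ?_
    exact hA1 q.1 q.2 c
  have hball : (μH[(m:ℝ)] (closedBall (0 : Fin m → ℝ) (2*n))) < ⊤ := by
    have hc : ((Fintype.card (Fin m) : ℕ) : ℝ) = (m:ℝ) := by simp
    rw [← hc, MeasureTheory.hausdorffMeasure_pi_real]
    exact (isCompact_closedBall _ _).measure_lt_top
  calc μH[(m:ℝ)] (Metric.sphere (0:Cn n) 1)
      ≤ μH[(m:ℝ)] (⋃ q : (Fin n × Bool) × Bool,
          (π ∘ A q.1 q.2) '' (closedBall (0 : Fin m → ℝ) (2*n))) := measure_mono hcov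
    _ ≤ ∑' q : (Fin n × Bool) × Bool,
          μH[(m:ℝ)] ((π ∘ A q.1 q.2) '' (closedBall (0 : Fin m → ℝ) (2*n))) :=
        measure_iUnion_le _
    _ < ⊤ := by
        rw [tsum_fintype]
        refine ENNReal.sum_lt_top.mpr fun q _ => ?_
        refine lt_of_le_of_lt ((hlipcomp q).hausdorffMeasure_image_le hd0) ?_
        exact ENNReal.mul_lt_top (ENNReal.rpow_lt_top_of_nonneg hd0 ENNReal.coe_ne_top) hball

end MeasurePart2

section FinalAux
open Metric Set
variable {n : ℕ} {F : Type*} [NormedAddCommGroup F] [NormedSpace ℝ F]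

lemma sphere_hd_scale (hn : 0 < n) {R : ℝ} (hR : 0 < R) :
    μH[2*(n:ℝ)-1] (Metric.sphere (0:Cn n) R)
      ≤ (‖R‖₊ : ENNReal) ^ (2*(n:ℝ)-1) * μH[2*(n:ℝ)-1] (Metric.sphere (0:Cn n) 1) := by
  have hd0 : (0:ℝ) ≤ 2*(n:ℝ)-1 := by
    have h1 : (1:ℝ) ≤ (n:ℝ) := by exact_mod_cast hn
    linarith
  have himg : Metric.sphere (0:Cn n) R ⊆ (fun y : Cn n => R • y) '' Metric.sphere 0 1 := by
    intro x hx
    have hx1 : ‖x‖ = R := by simpa using hx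
    refine ⟨R⁻¹ • x, ?_, ?_⟩
    · simp only [Metric.mem_sphere, dist_zero_right, norm_smul, Real.norm_eq_abs,
        abs_of_pos (inv_pos.2 hR), hx1]
      exact inv_mul_cancel₀ hR.ne'
    · show R • R⁻¹ • x = x
      rw [smul_smul, mul_inv_cancel₀ hR.ne', one_smul]
  calc μH[2*(n:ℝ)-1] (Metric.sphere (0:Cn n) R)
      ≤ μH[2*(n:ℝ)-1] ((fun y : Cn n => R • y) '' Metric.sphere 0 1) := measure_mono himg
    _ ≤ _ := (lipschitzWith_smul R).hausdorffMeasure_image_le hd0 _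

/-- The boundary integrand. -/
def bdryIntegrand (K : KahlerStructure F) (f : Cn n → F) (x : Cn n) : ℝ :=
  K.g (f x) (fderiv ℝ f x (‖x‖⁻¹ • x)) (fderiv ℝ f x (‖x‖⁻¹ • x))
    - K.g (f x) (K.J (f x) (fderiv ℝ f x (‖x‖⁻¹ • x)))
        (fderiv ℝ f x (Complex.I • (‖x‖⁻¹ • x)))

lemma bdryIntegrand_continuousOn (K : KahlerStructure F) (f : Cn n → F)
    (hf : ContDiff ℝ (⊤ : ℕ∞) f) : ContinuousOn (bdryIntegrand K f) {x : Cn n | x ≠ 0} := by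
  have hDf : Continuous (fderiv ℝ f) := hf.continuous_fderiv (by simp)
  have hfc : Continuous f := hf.continuous
  have hg : Continuous fun x : Cn n => K.g (f x) := K.g_smooth.continuous.comp hfc
  have hJ : Continuous fun x : Cn n => K.J (f x) := K.J_smooth.continuous.comp hfc
  have hu : ContinuousOn (fun x : Cn n => ‖x‖⁻¹ • x) {x : Cn n | x ≠ 0} := by
    refine ContinuousOn.smul (f := fun x : Cn n => ‖x‖⁻¹) ?_ continuous_id.continuousOn
    exact (continuous_norm.continuousOn).inv₀ fun x hx => norm_ne_zero_iff.2 hx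
  have ha : ContinuousOn (fun x : Cn n => fderiv ℝ f x (‖x‖⁻¹ • x)) {x : Cn n | x ≠ 0} :=
    ContinuousOn.clm_apply hDf.continuousOn hu
  have hb : ContinuousOn (fun x : Cn n => fderiv ℝ f x (Complex.I • (‖x‖⁻¹ • x)))
      {x : Cn n | x ≠ 0} :=
    ContinuousOn.clm_apply hDf.continuousOn (hu.const_smul Complex.I)
  have hJa : ContinuousOn (fun x : Cn n => K.J (f x) (fderiv ℝ f x (‖x‖⁻¹ • x)))
      {x : Cn n | x ≠ 0} := ContinuousOn.clm_apply hJ.continuousOn ha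
  exact ((hg.continuousOn.clm_apply ha).clm_apply ha).sub
    ((hg.continuousOn.clm_apply hJa).clm_apply hb)

end FinalAux

/-- STATEMENT 18: under the decay hypothesis `e(f)·e''(f)(p) ≤ C/R^{4n+α}`, the boundary
term is bounded below by `-(C'/2)·R^{-α/2}` for large `R`. -/theorem boundary_term_estimate {n : ℕ} {F : Type*} [NormedAddCommGroup F] [NormedSpace ℝ F]
    (K : KahlerStructure F) (f : Cn n → F) (hf : ContDiff ℝ (⊤ : ℕ∞) f)
    (hharm : IsHarmonic K.Γ f)
    (C α R₀ : ℝ) (hC : 0 < C) (hα : 0 < α)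
    (hdecay : ∀ p : Cn n, R₀ ≤ ‖p‖ →
      energyDensity K.g f p * dbarDensity K f p ≤ C / ‖p‖ ^ (4 * (n : ℝ) + α)) :
    ∃ C' > (0 : ℝ), ∃ R₁ : ℝ, ∀ R ≥ R₁,
      (R / 2) * ∫ x in Metric.sphere (0 : Cn n) R,
          (K.g (f x) (fderiv ℝ f x (‖x‖⁻¹ • x)) (fderiv ℝ f x (‖x‖⁻¹ • x))
            - K.g (f x) (K.J (f x) (fderiv ℝ f x (‖x‖⁻¹ • x)))
                (fderiv ℝ f x (Complex.I • (‖x‖⁻¹ • x))))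
            ∂(μH[(2 * (n : ℝ) - 1)])
        ≥ -(C' / 2) * R ^ (-(α / 2)) := by
  classical
  rcases Nat.eq_zero_or_pos n with hn0 | hn
  · -- trivial case `n = 0` : the sphere is empty
    refine ⟨1, one_pos, max R₀ 1, fun R hR => ?_⟩
    have hR1 : (1:ℝ) ≤ R := le_trans (le_max_right _ _) hR
    have hR0 : (0:ℝ) < R := lt_of_lt_of_le one_pos hR1
    have hsph : Metric.sphere (0:Cn n) R = ∅ := by
      ext x
      simp only [Metric.mem_sphere, dist_zero_right, Set.mem_empty_iff_false, iff_false]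
      have hx : ‖x‖ = 0 := by
        subst hn0
        rw [EuclideanSpace.norm_eq]
        simp
      rw [hx]
      exact fun h => absurd h.symm (ne_of_gt hR0)
    rw [ge_iff_le, hsph, Measure.restrict_empty, integral_zero_measure, mul_zero]
    have hpow : (0:ℝ) < R ^ (-(α/2)) := Real.rpow_pos_of_pos hR0 _
    nlinarith
  · -- main case
    have hd0 : (0:ℝ) ≤ 2*(n:ℝ)-1 := by
      have h1 : (1:ℝ) ≤ (n:ℝ) := by exact_mod_cast hn
      linarith
    have hfin1 := sphere_hd_lt_top (n := n) hn
    set S1 : ℝ := (μH[2*(n:ℝ)-1] (Metric.sphere (0:Cn n) 1)).toReal with hS1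
    have hS1nn : 0 ≤ S1 := ENNReal.toReal_nonneg
    have hsqC : 0 < Real.sqrt C := Real.sqrt_pos.2 hC
    refine ⟨4 * Real.sqrt C * (S1 + 1), by positivity, max R₀ 1, fun R hR => ?_⟩
    have hRR0 : R₀ ≤ R := le_trans (le_max_left _ _) hR
    have hR1 : (1:ℝ) ≤ R := le_trans (le_max_right _ _) hR
    have hR0 : (0:ℝ) < R := lt_of_lt_of_le one_pos hR1
    -- the constant lower bound for the integrand on the sphere
    have hpoint : ∀ x ∈ Metric.sphere (0:Cn n) R,
        -(4 * Real.sqrt C * R ^ (-(2*(n:ℝ) + α/2))) ≤ bdryIntegrand K f x := by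
      intro x hx
      have hxn : ‖x‖ = R := by simpa using hx
      have hx0 : x ≠ 0 := by
        intro h
        rw [h, norm_zero] at hxn
        exact absurd hxn.symm (ne_of_gt hR0)
      have hp : -(4 * Real.sqrt (energyDensity K.g f x * dbarDensity K f x))
          ≤ bdryIntegrand K f x := pointwise_ge K f x hx0
      have hde : energyDensity K.g f x * dbarDensity K f x ≤ C / R ^ (4*(n:ℝ)+α) := by
        have := hdecay x (by rw [hxn]; exact hRR0)
        rwa [hxn] at this
      have heq : (Real.sqrt C * R ^ (-(2*(n:ℝ) + α/2)))^2 = C / R ^ (4*(n:ℝ)+α) := by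
        have hpos : R ^ (4*(n:ℝ)+α) ≠ 0 := (Real.rpow_pos_of_pos hR0 _).ne'
        rw [mul_pow, Real.sq_sqrt hC.le, sq, ← Real.rpow_add hR0,
          eq_div_iff hpos, mul_assoc, ← Real.rpow_add hR0,
          show -(2*(n:ℝ) + α/2) + -(2*(n:ℝ) + α/2) + (4*(n:ℝ)+α) = 0 by ring,
          Real.rpow_zero, mul_one]
      have key : Real.sqrt (energyDensity K.g f x * dbarDensity K f x)
          ≤ Real.sqrt C * R ^ (-(2*(n:ℝ) + α/2)) := by
        calc Real.sqrt (energyDensity K.g f x * dbarDensity K f x)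
            ≤ Real.sqrt ((Real.sqrt C * R ^ (-(2*(n:ℝ) + α/2)))^2) := by
              refine Real.sqrt_le_sqrt ?_
              rw [heq]; exact hde
          _ = Real.sqrt C * R ^ (-(2*(n:ℝ) + α/2)) := Real.sqrt_sq (by positivity)
      linarith [hp, key]
    -- measure of the sphere
    have hscale := sphere_hd_scale (n := n) hn hR0
    have hfinprod : (‖R‖₊ : ENNReal) ^ (2*(n:ℝ)-1) * μH[2*(n:ℝ)-1] (Metric.sphere (0:Cn n) 1)
        ≠ ⊤ :=
      ENNReal.mul_ne_top (ENNReal.rpow_lt_top_of_nonneg hd0 ENNReal.coe_ne_top).ne hfin1.ne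
    have hRne : μH[2*(n:ℝ)-1] (Metric.sphere (0:Cn n) R) ≠ ⊤ :=
      (lt_of_le_of_lt hscale (lt_of_le_of_ne le_top hfinprod)).ne
    have hmeasR : (μH[2*(n:ℝ)-1] (Metric.sphere (0:Cn n) R)).toReal
        ≤ R ^ (2*(n:ℝ)-1) * (S1 + 1) := by
      have h1 := ENNReal.toReal_mono hfinprod hscale
      rw [ENNReal.toReal_mul, ← ENNReal.toReal_rpow, ENNReal.coe_toReal, coe_nnnorm,
        Real.norm_eq_abs, abs_of_pos hR0] at h1
      calc (μH[2*(n:ℝ)-1] (Metric.sphere (0:Cn n) R)).toReal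
          ≤ R ^ (2*(n:ℝ)-1) * S1 := h1
        _ ≤ R ^ (2*(n:ℝ)-1) * (S1 + 1) := by
            have : (0:ℝ) ≤ R ^ (2*(n:ℝ)-1) := (Real.rpow_pos_of_pos hR0 _).le
            nlinarith
    -- integrability
    have hsub : Metric.sphere (0:Cn n) R ⊆ {x : Cn n | x ≠ 0} := by
      intro x hx
      have hxn : ‖x‖ = R := by simpa using hx
      intro h
      rw [h, norm_zero] at hxn
      exact absurd hxn.symm (ne_of_gt hR0)
    have hcont := (bdryIntegrand_continuousOn K f hf).mono hsub
    obtain ⟨M, hM⟩ := (isCompact_sphere (0:Cn n) R).exists_bound_of_continuousOn hcont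
    have hmeas : MeasurableSet (Metric.sphere (0:Cn n) R) :=
      Metric.isClosed_sphere.measurableSet
    have hintconst : MeasureTheory.IntegrableOn (fun _ : Cn n => M)
        (Metric.sphere (0:Cn n) R) (μH[2*(n:ℝ)-1]) :=
      MeasureTheory.integrableOn_const hRne enorm_ne_top
    have hintg : MeasureTheory.IntegrableOn (bdryIntegrand K f)
        (Metric.sphere (0:Cn n) R) (μH[2*(n:ℝ)-1]) := by
      refine MeasureTheory.Integrable.mono' hintconst
        (hcont.aestronglyMeasurable hmeas) ?_
      exact (MeasureTheory.ae_restrict_iff' hmeas).mpr (MeasureTheory.ae_of_all _ hM)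
    have hkey := MeasureTheory.setIntegral_ge_of_const_le hmeas hRne hpoint hintg
    -- assembly
    rw [ge_iff_le]
    show -(4 * Real.sqrt C * (S1 + 1) / 2) * R ^ (-(α / 2))
        ≤ R / 2 * ∫ x in Metric.sphere (0 : Cn n) R, bdryIntegrand K f x ∂(μH[(2*(n:ℝ)-1)])
    have hc0 : -(4 * Real.sqrt C * R ^ (-(2*(n:ℝ) + α/2))) ≤ 0 := by
      have : (0:ℝ) ≤ 4 * Real.sqrt C * R ^ (-(2*(n:ℝ) + α/2)) := by positivity
      linarith
    have h5 : -(4 * Real.sqrt C * R ^ (-(2*(n:ℝ) + α/2))) * (R ^ (2*(n:ℝ)-1) * (S1 + 1))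
        ≤ -(4 * Real.sqrt C * R ^ (-(2*(n:ℝ) + α/2)))
            * (μH[2*(n:ℝ)-1] (Metric.sphere (0:Cn n) R)).toReal :=
      mul_le_mul_of_nonpos_left hmeasR hc0
    have h6 := le_trans h5 (le_of_eq_of_le (mul_comm _ _) hkey)
    have h7 : R / 2 * (-(4 * Real.sqrt C * R ^ (-(2*(n:ℝ) + α/2)))
          * (R ^ (2*(n:ℝ)-1) * (S1 + 1)))
        ≤ R / 2 * ∫ x in Metric.sphere (0 : Cn n) R, bdryIntegrand K f x ∂(μH[(2*(n:ℝ)-1)]) :=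
      mul_le_mul_of_nonneg_left h6 (by positivity)
    have e2 : R * (R ^ (-(2*(n:ℝ) + α/2)) * R ^ (2*(n:ℝ)-1)) = R ^ (-(α/2)) := by
      rw [← Real.rpow_add hR0, mul_comm, ← Real.rpow_add_one hR0.ne']
      congr 1
      ring
    have e1 : R / 2 * (-(4 * Real.sqrt C * R ^ (-(2*(n:ℝ) + α/2)))
          * (R ^ (2*(n:ℝ)-1) * (S1 + 1)))
        = -(4 * Real.sqrt C * (S1 + 1) / 2)
            * (R * (R ^ (-(2*(n:ℝ) + α/2)) * R ^ (2*(n:ℝ)-1))) := by ring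
    rw [e2] at e1
    linarith [h7, e1.ge, e1.le]

end
end
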